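/- Let n ≥ 3, M be positive integers with n + 1 odd and 3 | (n+1), and suppose M³(n-1)²(n+4)⁴A⁷/(54·n⁴(n+1)²·R(n,M)) is a nonzero integer, where A = 6M - n(n+1)(n+5) and R(n,M) is the explicit degree-6 polynomial in M. Then n + 1 divides 3M². -/
import Mathlib

noncomputable def fv (p : ℕ) (x : ℤ) : ℕ := x.natAbs.factorization p

lemma fv_mul (p : ℕ) {x y : ℤ} (hx : x ≠ 0) (hy : y ≠ 0) :
    fv p (x*y) = fv p x + fv p y := by
  unfold fv
  rw [Int.natAbs_mul, Nat.factorization_mul (Int.natAbs_ne_zero.mpr hx) (Int.natAbs_ne_zero.mpr hy)]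
  rfl

lemma fv_pow (p : ℕ) (x : ℤ) (k : ℕ) : fv p (x^k) = k * fv p x := by
  unfold fv
  rw [Int.natAbs_pow, Nat.factorization_pow]; rfl

lemma fv_pow_dvd_iff {p : ℕ} (hp : p.Prime) {x : ℤ} (hx : x ≠ 0) (k : ℕ) :
    (p:ℤ)^k ∣ x ↔ k ≤ fv p x := by
  rw [← Int.natAbs_dvd_natAbs, ← Nat.cast_pow, Int.natAbs_natCast]
  exact hp.pow_dvd_iff_le_factorization (Int.natAbs_ne_zero.mpr hx)

lemma fv_dvd_le {p : ℕ} {x y : ℤ} (h : x ∣ y) (hy : y ≠ 0) : fv p x ≤ fv p y := by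
  have hx : x ≠ 0 := by rintro rfl; exact hy ((zero_dvd_iff).mp h)
  have := Nat.factorization_le_iff_dvd (Int.natAbs_ne_zero.mpr hx) (Int.natAbs_ne_zero.mpr hy)
  exact (this.mpr (Int.natAbs_dvd_natAbs.mpr h)) p

lemma fv_eq {p : ℕ} (hp : p.Prime) {x : ℤ} (hx : x ≠ 0) {k : ℕ}
    (h1 : (p:ℤ)^k ∣ x) (h2 : ¬ (p:ℤ)^(k+1) ∣ x) : fv p x = k := by
  have a := (fv_pow_dvd_iff hp hx k).mp h1
  have b : ¬ (k+1 ≤ fv p x) := fun h => h2 ((fv_pow_dvd_iff hp hx (k+1)).mpr h)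
  omega

lemma fv_eq_zero {p : ℕ} (hp : p.Prime) {x : ℤ} (hx : x ≠ 0) (h : ¬ (p:ℤ) ∣ x) : fv p x = 0 :=
  fv_eq hp hx (k := 0) (by simp) (by simpa using h)

lemma key (p : ℕ) (t M E : ℤ) (e c j m g : ℕ)
    (ht : (p:ℤ)^(2*e+c+1) ∣ t) (hMe : (p:ℤ)^e ∣ M) (h3c : (p:ℤ)^c ∣ 3)
    (hineq : 6*e+6*c+1 ≤ (2*e+c+1)*j + e*m + c*g) :
    (p:ℤ)^(6*e+6*c+1) ∣ t^j * M^m * (3:ℤ)^g * E := by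
  have h1 : (p:ℤ)^((2*e+c+1)*j) ∣ t^j := by rw [pow_mul]; exact pow_dvd_pow_of_dvd ht j
  have h2 : (p:ℤ)^(e*m) ∣ M^m := by rw [pow_mul]; exact pow_dvd_pow_of_dvd hMe m
  have h3 : (p:ℤ)^(c*g) ∣ (3:ℤ)^g := by rw [pow_mul]; exact pow_dvd_pow_of_dvd h3c g
  have h4 : (p:ℤ)^((2*e+c+1)*j + e*m + c*g) ∣ t^j * M^m * (3:ℤ)^g := by
    rw [pow_add, pow_add]; exact mul_dvd_mul (mul_dvd_mul h1 h2) h3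
  exact dvd_mul_of_dvd_left ((pow_dvd_pow _ hineq).trans h4) E

set_option maxHeartbeats 2000000 in
lemma decomp (n M : ℤ) :
    2^14*3^6*M^6 - 2^13*3^7*n*(n+1)*(n+3)*M^5 + 2^9*3^5*n^2*(n+1)*(n^4+93*n^3+629*n^2+1339*n+818)*M^4 - 2^7*3^4*n^3*(n+1)^2*(13*n^5+436*n^4+3688*n^3+12782*n^2+19163*n+9998)*M^3 + 2^2*3^3*n^4*(n+1)^3*(n+2)*(n+7)^2*(5*n^4+447*n^3+3303*n^2+7873*n+5652)*M^2 - 2^2*3^3*n^5*(n+1)^4*(n+2)^2*(n+5)^2*(n+7)^3*(3*n+5)*M + n^6*(n+1)^5*(n+2)^3*(n+5)^3*(n+7)^4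
    - 2^14*3^6*M^6 =
      (n+1)^1*M^4*(3:ℤ)^5*((147456)*M^1+(8192)*M^0) +
      (n+1)^2*M^3*(3:ℤ)^4*((-221184)*M^2+(497664)*M^1+(45056)*M^0) +
      (n+1)^3*M^2*(3:ℤ)^4*((-221184)*M^3+(-522240)*M^2+(246784)*M^1+(30720)*M^0) +
      (n+1)^4*M^1*(3:ℤ)^4*((-410112)*M^3+(-472576)*M^2+(42304)*M^1+(9216)*M^0) +
      (n+1)^5*M^0*(3:ℤ)^3*((824832)*M^4+(-744192)*M^3+(-612224)*M^2+(-13824)*M^1+(3072)*M^0) +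
      (n+1)^6*M^0*(3:ℤ)^3*((400896)*M^4+(1450368)*M^3+(-82336)*M^2+(-127296)*M^1+(-4864)*M^0) +
      (n+1)^7*M^0*(3:ℤ)^3*((4608)*M^4+(352512)*M^3+(884384)*M^2+(68672)*M^1+(-10432)*M^0) +
      (n+1)^8*M^0*(3:ℤ)^1*((-3456000)*M^3+(-372996)*M^2+(1867680)*M^1+(158192)*M^0) +
      (n+1)^9*M^0*(3:ℤ)^0*((-3442176)*M^3+(-12151296)*M^2+(-2769120)*M^1+(376336)*M^0) +
      (n+1)^10*M^0*(3:ℤ)^2*((-14976)*M^3+(-79596)*M^2+(-458940)*M^1+(-72152)*M^0) +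
      (n+1)^11*M^0*(3:ℤ)^1*((754560)*M^2+(467100)*M^1+(-93212)*M^0) +
      (n+1)^12*M^0*(3:ℤ)^3*((23380)*M^2+(54060)*M^1+(15215)*M^0) +
      (n+1)^13*M^0*(3:ℤ)^1*((16992)*M^2+(-15300)*M^1+(50975)*M^0) +
      (n+1)^14*M^0*(3:ℤ)^1*((180)*M^2+(-78012)*M^1+(-37360)*M^0) +
      (n+1)^15*M^0*(3:ℤ)^0*((-66852)*M^1+(-61184)*M^0) +
      (n+1)^16*M^0*(3:ℤ)^2*((-852)*M^1+(482)*M^0) +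
      (n+1)^17*M^0*(3:ℤ)^1*((-108)*M^1+(3278)*M^0) +
      (n+1)^18*M^0*(3:ℤ)^3*((112)*M^0) +
      (n+1)^19*M^0*(3:ℤ)^1*((148)*M^0) +
      (n+1)^20*M^0*(3:ℤ)^1*((11)*M^0) +
      (n+1)^21*M^0*(3:ℤ)^0*((1)*M^0)
  := by ring

set_option maxHeartbeats 2000000 in
lemma valcase (p : ℕ) (hp : p.Prime) (n M A R : ℤ)
    (hA : A = 6*M - n*(n+1)*(n+5))
    (hR : R = 2^14*3^6*M^6 - 2^13*3^7*n*(n+1)*(n+3)*M^5 + 2^9*3^5*n^2*(n+1)*(n^4+93*n^3+629*n^2+1339*n+818)*M^4 - 2^7*3^4*n^3*(n+1)^2*(13*n^5+436*n^4+3688*n^3+12782*n^2+19163*n+9998)*M^3 + 2^2*3^3*n^4*(n+1)^3*(n+2)*(n+7)^2*(5*n^4+447*n^3+3303*n^2+7873*n+5652)*M^2 - 2^2*3^3*n^5*(n+1)^4*(n+2)^2*(n+5)^2*(n+7)^3*(3*n+5)*M + n^6*(n+1)^5*(n+2)^3*(n+5)^3*(n+7)^4)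
    (hdvd : 54*n^4*(n+1)^2*R ∣ M^3*(n-1)^2*(n+4)^4*A^7)
    (hn0 : n ≠ 0) (hn10 : n+1 ≠ 0) (hn1' : n-1 ≠ 0) (hn40 : n+4 ≠ 0)
    (hM0 : M ≠ 0) (hA0 : A ≠ 0) (hR0 : R ≠ 0)
    (c : ℕ) (hc : c ≤ 1) (h3c : (p:ℤ)^c ∣ 3) (hfv3 : fv p 3 = c) (hfv2 : fv p 2 = 0)
    (hfvn4 : fv p (n+4) = c) (hfvn1 : fv p (n-1) = 0) (hfvn : fv p n = 0)
    (hae : 2*(fv p M) + c + 1 ≤ fv p (n+1)) : False := by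
  set e := fv p M with he
  set a := fv p (n+1) with ha
  have ht : (p:ℤ)^(2*e+c+1) ∣ (n+1) := (fv_pow_dvd_iff hp hn10 _).mpr hae
  have hMe : (p:ℤ)^e ∣ M := (fv_pow_dvd_iff hp hM0 e).mpr le_rfl
  -- valuation of A
  have hprod : (n+1) ∣ n*(n+1)*(n+5) := ⟨n*(n+5), by ring⟩
  have h3M : (p:ℤ)^(c+e) ∣ 3*M := by rw [pow_add]; exact mul_dvd_mul h3c hMe
  have hdA1 : (p:ℤ)^(c+e) ∣ A := by
    rw [hA]
    have h6M : (p:ℤ)^(c+e) ∣ 6*M := by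
      have : (6:ℤ)*M = 2*(3*M) := by ring
      rw [this]; exact h3M.mul_left 2
    exact dvd_sub h6M (((pow_dvd_pow (p:ℤ) (by omega)).trans ht).trans hprod)
  have hdA2 : ¬ (p:ℤ)^(c+e+1) ∣ A := by
    intro h
    have h6M : (p:ℤ)^(c+e+1) ∣ 6*M := by
      have heq : (6:ℤ)*M = A + n*(n+1)*(n+5) := by rw [hA]; ring
      rw [heq]
      exact dvd_add h (((pow_dvd_pow (p:ℤ) (by omega)).trans ht).trans hprod)
    have h6M0 : (6:ℤ)*M ≠ 0 := mul_ne_zero (by norm_num) hM0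
    have := (fv_pow_dvd_iff hp h6M0 (c+e+1)).mp h6M
    have hv6 : fv p (6*M) = c + e := by
      have h6 : (6:ℤ) = 2*3 := by norm_num
      rw [h6, mul_assoc, fv_mul p (by norm_num) (mul_ne_zero (by norm_num) hM0),
        fv_mul p (by norm_num) hM0, hfv2, hfv3]
      omega
    omega
  have hfvA : fv p A = c + e := fv_eq hp hA0 hdA1 hdA2
  -- valuation of R
  have hRest : (p:ℤ)^(6*e+6*c+1) ∣ R - 2^14*3^6*M^6 := by
    rw [hR, decomp n M]
    repeat' apply dvd_add
    all_goals exact key p (n+1) M _ e c _ _ _ ht hMe h3c (by omega)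
  have hfirstval : fv p (2^14*3^6*M^6) = 6*c + 6*e := by
    rw [fv_mul p (by norm_num) (pow_ne_zero 6 hM0), fv_mul p (by norm_num) (by norm_num),
      fv_pow, fv_pow, fv_pow, hfv2, hfv3, he]
    omega
  have hfirst0 : (2:ℤ)^14*3^6*M^6 ≠ 0 := by
    exact mul_ne_zero (by norm_num) (pow_ne_zero 6 hM0)
  have hdR1 : (p:ℤ)^(6*e+6*c) ∣ R := by
    have heq : R = (R - 2^14*3^6*M^6) + 2^14*3^6*M^6 := by ring
    rw [heq]
    refine dvd_add ((pow_dvd_pow _ (by omega)).trans hRest) ?_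
    exact (fv_pow_dvd_iff hp hfirst0 _).mpr (by omega)
  have hdR2 : ¬ (p:ℤ)^(6*e+6*c+1) ∣ R := by
    intro h
    have hdf : (p:ℤ)^(6*e+6*c+1) ∣ 2^14*3^6*M^6 := by
      have heq : (2:ℤ)^14*3^6*M^6 = R - (R - 2^14*3^6*M^6) := by ring
      rw [heq]; exact dvd_sub h hRest
    have := (fv_pow_dvd_iff hp hfirst0 _).mp hdf
    omega
  have hfvR : fv p R = 6*e+6*c := fv_eq hp hR0 hdR1 hdR2
  -- compare valuations
  have hN0 : M^3*(n-1)^2*(n+4)^4*A^7 ≠ 0 := by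
    exact mul_ne_zero (mul_ne_zero (mul_ne_zero (pow_ne_zero 3 hM0) (pow_ne_zero 2 hn1'))
      (pow_ne_zero 4 hn40)) (pow_ne_zero 7 hA0)
  have hle := fv_dvd_le (p := p) hdvd hN0
  have hD0s : (54:ℤ)*n^4 ≠ 0 := mul_ne_zero (by norm_num) (pow_ne_zero 4 hn0)
  have hfvD : fv p (54*n^4*(n+1)^2*R) = fv p 54 + 4*fv p n + 2*a + fv p R := by
    rw [fv_mul p (mul_ne_zero hD0s (pow_ne_zero 2 hn10)) hR0,
      fv_mul p hD0s (pow_ne_zero 2 hn10), fv_mul p (by norm_num) (pow_ne_zero 4 hn0),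
      fv_pow, fv_pow]
  have hfv54 : fv p 54 = 3*c := by
    have h54 : (54:ℤ) = 2*3^3 := by norm_num
    rw [h54, fv_mul p (by norm_num) (by norm_num), fv_pow, hfv2, hfv3]
    omega
  have hfvN : fv p (M^3*(n-1)^2*(n+4)^4*A^7) = 3*e + 2*0 + 4*c + 7*(c+e) := by
    rw [fv_mul p (mul_ne_zero (mul_ne_zero (pow_ne_zero 3 hM0) (pow_ne_zero 2 hn1'))
        (pow_ne_zero 4 hn40)) (pow_ne_zero 7 hA0),
      fv_mul p (mul_ne_zero (pow_ne_zero 3 hM0) (pow_ne_zero 2 hn1')) (pow_ne_zero 4 hn40),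
      fv_mul p (pow_ne_zero 3 hM0) (pow_ne_zero 2 hn1'),
      fv_pow, fv_pow, fv_pow, fv_pow, hfvA, hfvn4, hfvn1, ← he]
  rw [hfvD, hfvN, hfv54, hfvn, hfvR] at hle
  omega

theorem stmt (n M : ℤ) (hn : 3 ≤ n) (hM : 0 < M)
    (A : ℤ) (hA : A = 6*M - n*(n+1)*(n+5))
    (R : ℤ) (hR : R = 2^14*3^6*M^6 - 2^13*3^7*n*(n+1)*(n+3)*M^5 + 2^9*3^5*n^2*(n+1)*(n^4+93*n^3+629*n^2+1339*n+818)*M^4 - 2^7*3^4*n^3*(n+1)^2*(13*n^5+436*n^4+3688*n^3+12782*n^2+19163*n+9998)*M^3 + 2^2*3^3*n^4*(n+1)^3*(n+2)*(n+7)^2*(5*n^4+447*n^3+3303*n^2+7873*n+5652)*M^2 - 2^2*3^3*n^5*(n+1)^4*(n+2)^2*(n+5)^2*(n+7)^3*(3*n+5)*M + n^6*(n+1)^5*(n+2)^3*(n+5)^3*(n+7)^4)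
    (hint : ∃ k : ℤ, k ≠ 0 ∧
      ((M^3*(n-1)^2*(n+4)^4*A^7 : ℚ) / (54*n^4*(n+1)^2*R) = (k : ℚ))) (hodd : Odd (n+1)) (h3 : 3 ∣ (n+1)) :
    (n + 1) ∣ 3 * M^2 := by
  obtain ⟨k, hk0, hkeq⟩ := hint
  have hDq : (54*(n:ℚ)^4*((n:ℚ)+1)^2*(R:ℚ)) ≠ 0 := by
    intro h
    rw [h, div_zero] at hkeq
    exact hk0 (by exact_mod_cast hkeq.symm)
  have hNk : ((M:ℚ)^3*((n:ℚ)-1)^2*((n:ℚ)+4)^4*(A:ℚ)^7)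
      = (54*(n:ℚ)^4*((n:ℚ)+1)^2*(R:ℚ)) * (k:ℚ) := by
    rw [(div_eq_iff hDq).mp hkeq]; ring
  have hNkZ : M^3*(n-1)^2*(n+4)^4*A^7 = (54*n^4*(n+1)^2*R) * k := by exact_mod_cast hNk
  have hdvd : 54*n^4*(n+1)^2*R ∣ M^3*(n-1)^2*(n+4)^4*A^7 := ⟨k, hNkZ⟩
  have hD0 : (54*n^4*(n+1)^2*R : ℤ) ≠ 0 := by
    intro h
    apply hDq
    have h2 : ((54*n^4*(n+1)^2*R : ℤ) : ℚ) = 0 := by rw [h]; simp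
    push_cast at h2
    linarith
  have hN0 : M^3*(n-1)^2*(n+4)^4*A^7 ≠ 0 := by
    rw [hNkZ]; exact mul_ne_zero hD0 hk0
  have hM0 : M ≠ 0 := hM.ne'
  have hn0 : n ≠ 0 := by omega
  have hn10 : n+1 ≠ 0 := by omega
  have hn1' : n-1 ≠ 0 := by omega
  have hn40 : n+4 ≠ 0 := by omega
  have hR0 : R ≠ 0 := by intro h; apply hD0; rw [h]; ring
  have hA0 : A ≠ 0 := by intro h; apply hN0; rw [h]; ring
  have h3M20 : (3*M^2 : ℤ) ≠ 0 := by positivity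
  rw [← Int.natAbs_dvd_natAbs,
    ← Nat.factorization_le_iff_dvd (Int.natAbs_ne_zero.mpr hn10) (Int.natAbs_ne_zero.mpr h3M20),
    Finsupp.le_def]
  intro p
  by_contra hconx
  push_neg at hconx
  have hcon : fv p (3*M^2) < fv p (n+1) := hconx
  have hp : p.Prime := by
    by_contra hnp
    have : (n+1).natAbs.factorization p = 0 := Nat.factorization_eq_zero_of_not_prime _ hnp
    have h0 : fv p (n+1) = 0 := this
    omega
  have hple : (2:ℤ) ≤ (p:ℤ) := by exact_mod_cast hp.two_le
  have hpd : (p:ℤ) ∣ n+1 := by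
    have := (fv_pow_dvd_iff hp hn10 1).mpr (by omega)
    simpa using this
  have hp2 : p ≠ 2 := by
    rintro rfl
    obtain ⟨t, ht⟩ := hodd
    omega
  have hp2' : (p:ℤ) ≠ 2 := by exact_mod_cast hp2
  have hfvn : fv p n = 0 := by
    refine fv_eq_zero hp hn0 ?_
    intro h
    have h1 : (p:ℤ) ∣ 1 := by
      have := dvd_sub hpd h
      simpa using this
    have := Int.le_of_dvd one_pos h1
    omega
  have hfvn1 : fv p (n-1) = 0 := by
    refine fv_eq_zero hp hn1' ?_
    intro h
    have h1 : (p:ℤ) ∣ 2 := by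
      have h2 := dvd_sub hpd h
      have h3' : (n+1) - (n-1) = (2:ℤ) := by ring
      rwa [h3'] at h2
    have := Int.le_of_dvd (by norm_num) h1
    omega
  have hfv2 : fv p 2 = 0 := by
    refine fv_eq_zero hp (by norm_num) ?_
    intro h
    have := Int.le_of_dvd (by norm_num) h
    omega
  by_cases hp3 : p = 3
  · subst hp3
    have hfv3 : fv 3 3 = 1 := by
      unfold fv
      norm_num [Nat.Prime.factorization_self (by norm_num : Nat.Prime 3)]
    have h3c : ((3:ℕ):ℤ)^(1:ℕ) ∣ (3:ℤ) := by norm_num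
    have hfv3M2 : fv 3 (3*M^2) = 1 + 2*(fv 3 M) := by
      rw [fv_mul 3 (by norm_num) (pow_ne_zero 2 hM0), fv_pow, hfv3]
    have hae : 2*(fv 3 M) + 1 + 1 ≤ fv 3 (n+1) := by omega
    have h9 : (9:ℤ) ∣ n+1 := by
      have h := (fv_pow_dvd_iff hp hn10 2).mpr (by omega)
      push_cast at h
      exact h
    have hfvn4 : fv 3 (n+4) = 1 := by
      refine fv_eq hp hn40 (k := 1) ?_ ?_
      · simpa using (by omega : (3:ℤ) ∣ n+4)
      · push_cast
        omega
    exact valcase 3 hp n M A R hA hR hdvd hn0 hn10 hn1' hn40 hM0 hA0 hR0 1 le_rfl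
      h3c hfv3 hfv2 hfvn4 hfvn1 hfvn hae
  · have hp3' : (p:ℤ) ≠ 3 := by exact_mod_cast hp3
    have hfv3 : fv p 3 = 0 := by
      refine fv_eq_zero hp (by norm_num) ?_
      intro h
      have hle3 : (p:ℤ) ≤ 3 := Int.le_of_dvd (by norm_num) h
      have hle3' : p ≤ 3 := by exact_mod_cast hle3
      have := hp.two_le
      omega
    have h3c : ((p:ℕ):ℤ)^(0:ℕ) ∣ (3:ℤ) := by simp
    have hfvn4 : fv p (n+4) = 0 := by
      refine fv_eq_zero hp hn40 ?_
      intro h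
      have h1 : (p:ℤ) ∣ 3 := by
        have h2 := dvd_sub h hpd
        have h3' : (n+4) - (n+1) = (3:ℤ) := by ring
        rwa [h3'] at h2
      have hle3 : (p:ℤ) ≤ 3 := Int.le_of_dvd (by norm_num) h1
      have hle3' : p ≤ 3 := by exact_mod_cast hle3
      have := hp.two_le
      omega
    have hfv3M2 : fv p (3*M^2) = 0 + 2*(fv p M) := by
      rw [fv_mul p (by norm_num) (pow_ne_zero 2 hM0), fv_pow, hfv3]
    have hae : 2*(fv p M) + 0 + 1 ≤ fv p (n+1) := by omega
    exact valcase p hp n M A R hA hR hdvd hn0 hn10 hn1' hn40 hM0 hA0 hR0 0 (by norm_num)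
      h3c hfv3 hfv2 hfvn4 hfvn1 hfvn hae
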